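/- For every nonnegative integer n, the number of integer solutions (x,y,z) to x² + 2y² + 2z² = 4n equals the number of integer solutions to x² + y² + z² = n, and the number of integer solutions to x² + 2y² + 2z² = 4n+3 equals the number of integer solutions to x² + y² + z² = 4n+3. -/

import Mathlib

/-!
Substituting `(u, v) = (y + z, y - z)` turns `x² + 2y² + 2z²` into `x² + u² + v²`, so the
representations of `N` by `x² + 2y² + 2z²` correspond to those by `x² + u² + v²` with `u ≡ v mod 2`.
Squares are `0` or `1` mod `4` according to parity, so when `N ≡ 0` or `3 mod 4` the summands of
`x² + u² + v² = N` are all even, resp. all odd, and the parity condition is automatic. Finally,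
the representations of `4n` by `x² + y² + z²` are exactly the doubles of those of `n`.
-/

theorem Int.sq_emod_four (x : ℤ) : x ^ 2 % 4 = x % 2 := by
  rcases Int.even_or_odd' x with ⟨k, rfl | rfl⟩
  · have : (2 * k) ^ 2 = 4 * k ^ 2 := by ring
    omega
  · have : (2 * k + 1) ^ 2 = 4 * (k ^ 2 + k) + 1 := by ring
    omega

theorem Int.even_of_sq_add_sq_add_sq_eq_four_mul {x y z m : ℤ} (h : x ^ 2 + y ^ 2 + z ^ 2 = 4 * m) :
    Even x ∧ Even y ∧ Even z := by
  have := x.sq_emod_four; have := y.sq_emod_four; have := z.sq_emod_four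
  simp only [Int.even_iff]
  omega

theorem Int.odd_of_sq_add_sq_add_sq_eq_four_mul_add_three {x y z m : ℤ}
    (h : x ^ 2 + y ^ 2 + z ^ 2 = 4 * m + 3) : Odd x ∧ Odd y ∧ Odd z := by
  have := x.sq_emod_four; have := y.sq_emod_four; have := z.sq_emod_four
  simp only [Int.odd_iff]
  omega

def sumSqTwoTwoEquivOfEvenAdd (N : ℤ) :
    {p : ℤ × ℤ × ℤ // p.1 ^ 2 + 2 * p.2.1 ^ 2 + 2 * p.2.2 ^ 2 = N} ≃
      {p : ℤ × ℤ × ℤ // p.1 ^ 2 + p.2.1 ^ 2 + p.2.2 ^ 2 = N ∧ Even (p.2.1 + p.2.2)} where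
  toFun := fun ⟨(x, y, z), h⟩ => ⟨(x, y + z, y - z), by linear_combination h, y, by ring⟩
  invFun := fun ⟨(x, u, v), h, huv⟩ =>
    ⟨(x, (u + v) / 2, u - (u + v) / 2), by
      have hw : 2 * ((u + v) / 2) = u + v := Int.mul_ediv_cancel' (even_iff_two_dvd.mp huv)
      linear_combination h + (2 * ((u + v) / 2) - u + v) * hw⟩
  left_inv := fun ⟨(x, y, z), _⟩ => by ext <;> dsimp only <;> omega
  right_inv := fun ⟨(x, u, v), _, k, hk⟩ => by ext <;> dsimp only at hk ⊢ <;> omega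

def sumSqTwoTwoEquivSumThreeSq (N : ℤ)
    (hN : ∀ x y z : ℤ, x ^ 2 + y ^ 2 + z ^ 2 = N → Even (y + z)) :
    {p : ℤ × ℤ × ℤ // p.1 ^ 2 + 2 * p.2.1 ^ 2 + 2 * p.2.2 ^ 2 = N} ≃
      {p : ℤ × ℤ × ℤ // p.1 ^ 2 + p.2.1 ^ 2 + p.2.2 ^ 2 = N} :=
  (sumSqTwoTwoEquivOfEvenAdd N).trans <|
    Equiv.subtypeEquivRight fun p => and_iff_left_of_imp (hN p.1 p.2.1 p.2.2)

def sumThreeSqEquivFourMul (m : ℤ) :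
    {p : ℤ × ℤ × ℤ // p.1 ^ 2 + p.2.1 ^ 2 + p.2.2 ^ 2 = m} ≃
      {p : ℤ × ℤ × ℤ // p.1 ^ 2 + p.2.1 ^ 2 + p.2.2 ^ 2 = 4 * m} where
  toFun := fun ⟨(x, y, z), h⟩ => ⟨(2 * x, 2 * y, 2 * z), by linear_combination 4 * h⟩
  invFun := fun ⟨(x, y, z), h⟩ => ⟨(x / 2, y / 2, z / 2), by
    obtain ⟨⟨a, rfl⟩, ⟨b, rfl⟩, ⟨c, rfl⟩⟩ := Int.even_of_sq_add_sq_add_sq_eq_four_mul h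
    simp only [← two_mul, Int.mul_ediv_cancel_left _ two_ne_zero] at h ⊢
    linarith⟩
  left_inv := fun ⟨(x, y, z), _⟩ => by ext <;> dsimp only <;> omega
  right_inv := fun ⟨(x, y, z), h⟩ => by
    obtain ⟨⟨a, rfl⟩, ⟨b, rfl⟩, ⟨c, rfl⟩⟩ := Int.even_of_sq_add_sq_add_sq_eq_four_mul h
    ext <;> dsimp only <;> omega

theorem stmt9 (n : ℕ) :
    Nat.card {p : ℤ × ℤ × ℤ // p.1^2 + 2*p.2.1^2 + 2*p.2.2^2 = (4*n : ℤ)} = Nat.card {p : ℤ × ℤ × ℤ // p.1^2 + p.2.1^2 + p.2.2^2 = (n : ℤ)} ∧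
    Nat.card {p : ℤ × ℤ × ℤ // p.1^2 + 2*p.2.1^2 + 2*p.2.2^2 = (4*n+3 : ℤ)} = Nat.card {p : ℤ × ℤ × ℤ // p.1^2 + p.2.1^2 + p.2.2^2 = (4*n+3 : ℤ)} := by
  constructor
  · have hN (x y z : ℤ) (h : x ^ 2 + y ^ 2 + z ^ 2 = 4 * n) : Even (y + z) :=
      have ⟨_, hy, hz⟩ := Int.even_of_sq_add_sq_add_sq_eq_four_mul h
      hy.add hz
    exact Nat.card_congr <|
      (sumSqTwoTwoEquivSumThreeSq _ hN).trans (sumThreeSqEquivFourMul n).symm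
  · have hN (x y z : ℤ) (h : x ^ 2 + y ^ 2 + z ^ 2 = 4 * n + 3) : Even (y + z) :=
      have ⟨_, hy, hz⟩ := Int.odd_of_sq_add_sq_add_sq_eq_four_mul_add_three h
      hy.add_odd hz
    exact Nat.card_congr (sumSqTwoTwoEquivSumThreeSq _ hN)
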